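/- Let M be an additive abelian group, let B be a commutative ring with an M-grading B = ⊕_{m∈M} B_m, and let I ⊆ B be a homogeneous ideal with I_m = B_m for all m ≠ 0 and such that (B₀, I₀) is a henselian pair, where I₀ := I ∩ B₀. Let E and F be finitely generated M-graded B-modules that are projective as B-modules. If there exists a B-linear bijection E/IE → F/IF which, for every m ∈ M, maps the image of E_m in E/IE onto the image of F_m in F/IF, then there exists a graded B-linear bijection E → F. -/

import Mathlib

/-!
Lift `w` to a linear map `u₀ : E → F` using that `E` is projective, and replace `u₀` by its
degree-preserving part `u`; since `w` respects the gradings and `I • F` is homogeneous, `u` still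
lifts `w`. Bijectivity of `u` then follows from a graded Nakayama lemma: if `N' ≤ N ⊔ I • N'` for
homogeneous submodules with `N'` finitely generated, Nakayama gives `r ≡ 1 mod I` with
`r • N' ≤ N`, and then also `r₀ • N' ≤ N` for the degree-zero component `r₀` of `r`. Since
`r₀ - 1 ∈ I₀`, which lies in the Jacobson radical of `B₀`, `r₀` is a unit, so `N' ≤ N`. This is
applied to `range u` in `F`, and to `ker u`, a finitely generated direct summand of `E` (as `F` is
projective) contained in `I • E`, hence with `ker u ≤ I • ker u`.
-/

open DirectSum SetLike

section QuotientLift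

variable {R M N : Type*} [CommRing R] [AddCommGroup M] [Module R M] [AddCommGroup N] [Module R N]
  {u : M →ₗ[R] N}

theorem LinearMap.range_id_sub_comp_eq_ker {s : N →ₗ[R] M} (hs : u ∘ₗ s = LinearMap.id) :
    range (LinearMap.id - s ∘ₗ u) = ker u := by
  refine le_antisymm ?_ fun x hx => ⟨x, by simp [mem_ker.1 hx]⟩
  rintro _ ⟨x, rfl⟩
  simp [← LinearMap.comp_apply u s, hs]

theorem LinearMap.ker_inf_smul_top_le_smul_ker {s : N →ₗ[R] M} (hs : u ∘ₗ s = LinearMap.id)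
    (I : Ideal R) : ker u ⊓ I • ⊤ ≤ I • ker u := by
  rintro x ⟨hx, hxI⟩
  have hpx : (LinearMap.id - s ∘ₗ u : M →ₗ[R] M) x = x := by simp [mem_ker.1 hx]
  rw [← range_id_sub_comp_eq_ker hs, range_eq_map, ← Submodule.map_smul'', ← hpx]
  exact Submodule.mem_map_of_mem hxI

theorem LinearMap.top_le_range_sup_of_mkQ_comp_eq {P : Submodule R M} {Q : Submodule R N}
    {w : (M ⧸ P) →ₗ[R] N ⧸ Q} (h : Q.mkQ ∘ₗ u = w ∘ₗ P.mkQ) (hw : Function.Surjective w) :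
    ⊤ ≤ range u ⊔ Q := by
  intro y _
  obtain ⟨x, hx⟩ := (hw.comp P.mkQ_surjective) (Q.mkQ y)
  have hxy : y - u x ∈ Q := by
    rw [← Submodule.Quotient.eq, ← Q.mkQ_apply, ← Q.mkQ_apply, ← LinearMap.comp_apply, h]
    exact hx.symm
  exact Submodule.mem_sup.2 ⟨u x, ⟨x, rfl⟩, y - u x, hxy, add_sub_cancel _ _⟩

theorem LinearMap.ker_le_of_mkQ_comp_eq {P : Submodule R M} {Q : Submodule R N}
    {w : (M ⧸ P) →ₗ[R] N ⧸ Q} (h : Q.mkQ ∘ₗ u = w ∘ₗ P.mkQ) (hw : Function.Injective w) :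
    ker u ≤ P := by
  intro x hx
  rw [← Submodule.Quotient.mk_eq_zero, ← P.mkQ_apply]
  apply hw
  rw [← LinearMap.comp_apply, ← h, LinearMap.comp_apply, mem_ker.1 hx, map_zero, map_zero]

end QuotientLift

section GradedModule

variable {ι B E F : Type*} [DecidableEq ι] [CommRing B] {𝒜 : ι → AddSubgroup B}
  [AddCommGroup E] {ℰ : ι → AddSubgroup E} [Decomposition ℰ]
  [AddCommGroup F] {ℱ : ι → AddSubgroup F} [Decomposition ℱ]

theorem DirectSum.coe_decompose_map_of_graded {G : Type*} [FunLike G E F]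
    [AddMonoidHomClass G E F] {u : G} (hu : ∀ m, ∀ x ∈ ℰ m, u x ∈ ℱ m) (x : E) (n : ι) :
    (decompose ℱ (u x) n : F) = u (decompose ℰ x n) := by
  induction x using Decomposition.inductionOn ℰ with
  | zero => simp
  | @homogeneous m x =>
    by_cases h : m = n
    · subst h
      rw [decompose_of_mem_same ℰ x.2, decompose_of_mem_same ℱ (hu m x x.2)]
    · rw [decompose_of_mem_ne ℰ x.2 h, decompose_of_mem_ne ℱ (hu m x x.2) h, map_zero]
  | add x y hx hy =>
    simp only [map_add, decompose_add, DirectSum.add_apply, AddSubgroup.coe_add, hx, hy]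

variable (ℰ ℱ) in
def AddMonoidHom.gradedPart (u : E →+ F) : E →+ F :=
  (toAddMonoid fun m => .mk' (fun x : ℰ m => (decompose ℱ (u x) m : F)) (by simp)).comp
    (decomposeAddEquiv ℰ).toAddMonoidHom

theorem AddMonoidHom.gradedPart_apply_of_mem (u : E →+ F) {m : ι} {x : E} (hx : x ∈ ℰ m) :
    u.gradedPart ℰ ℱ x = decompose ℱ (u x) m := by
  simp [gradedPart, decompose_of_mem ℰ hx]

variable [Module B E] [Module B F]

theorem LinearMap.ker_isHomogeneous_of_graded {u : E →ₗ[B] F}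
    (hu : ∀ m, ∀ x ∈ ℰ m, u x ∈ ℱ m) : (ker u).IsHomogeneous ℰ := fun n x hx => by
  rw [mem_ker, ← coe_decompose_map_of_graded hu, mem_ker.1 hx, decompose_zero,
    DirectSum.zero_apply, ZeroMemClass.coe_zero]

theorem LinearMap.range_isHomogeneous_of_graded {u : E →ₗ[B] F}
    (hu : ∀ m, ∀ x ∈ ℰ m, u x ∈ ℱ m) : (range u).IsHomogeneous ℱ := by
  rintro n _ ⟨x, rfl⟩
  exact ⟨_, (coe_decompose_map_of_graded hu x n).symm⟩

variable [AddCommGroup ι]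

theorem DirectSum.coe_decompose_smul_of_left_mem [GradedSMul 𝒜 ℰ] {k : ι} {b : B}
    (hb : b ∈ 𝒜 k) (x : E) (n : ι) :
    (decompose ℰ (b • x) n : E) = b • (decompose ℰ x (n - k) : E) := by
  induction x using Decomposition.inductionOn ℰ with
  | zero => simp
  | @homogeneous m x =>
    have hbx : b • (x : E) ∈ ℰ (k + m) := GradedSMul.smul_mem hb x.2
    by_cases h : m = n - k
    · rw [decompose_of_mem_same ℰ (by rwa [show k + m = n by rw [h, add_sub_cancel]] at hbx),
        decompose_of_mem_same ℰ (h ▸ x.2)]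
    · rw [decompose_of_mem_ne ℰ hbx (fun h' => h (by rw [← h', add_sub_cancel_left])),
        decompose_of_mem_ne ℰ x.2 h, smul_zero]
  | add x y hx hy =>
    simp only [smul_add, decompose_add, DirectSum.add_apply, AddSubgroup.coe_add, hx, hy]

variable [GradedRing 𝒜] {I : Ideal B}

theorem Ideal.IsHomogeneous.isUnit_decompose_zero (hI : I.IsHomogeneous 𝒜)
    (hjac : I.comap ((GradeZero.subring 𝒜).subtype : 𝒜 0 →+* B) ≤ Ideal.jacobson ⊥)
    {r : B} (hr : r - 1 ∈ I) : IsUnit (decompose 𝒜 r 0 : B) := by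
  have hr₀ : (decompose 𝒜 (r - 1) 0 : B) = decompose 𝒜 r 0 - 1 := by
    rw [decompose_sub, DirectSum.sub_apply, AddSubgroup.coe_sub,
      decompose_of_mem_same 𝒜 GradedOne.one_mem]
  let r₀ : 𝒜 0 := decompose 𝒜 r 0
  have hmem : r₀ - 1 ∈ I.comap ((GradeZero.subring 𝒜).subtype : 𝒜 0 →+* B) :=
    show (decompose 𝒜 r 0 : B) - 1 ∈ I from hr₀ ▸ hI 0 hr
  exact (Ideal.isUnit_of_sub_one_mem_jacobson_bot r₀ (hjac hmem)).map
    ((GradeZero.subring 𝒜).subtype : 𝒜 0 →+* B)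

variable (𝒜) in
theorem DirectSum.coe_decompose_smul_of_right_mem [GradedSMul 𝒜 ℰ] (r : B) {m : ι} {x : E}
    (hx : x ∈ ℰ m) (n : ι) : (decompose ℰ (r • x) n : E) = (decompose 𝒜 r (n - m) : B) • x := by
  induction r using Decomposition.inductionOn 𝒜 with
  | zero => simp
  | @homogeneous k b =>
    have hbx : (b : B) • x ∈ ℰ (k + m) := GradedSMul.smul_mem b.2 hx
    by_cases h : k = n - m
    · rw [decompose_of_mem_same ℰ (by rwa [show k + m = n by rw [h, sub_add_cancel]] at hbx),
        decompose_of_mem_same 𝒜 (h ▸ b.2)]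
    · rw [decompose_of_mem_ne ℰ hbx (fun h' => h (by rw [← h', add_sub_cancel_right])),
        decompose_of_mem_ne 𝒜 b.2 h, zero_smul]
  | add r s hr hs =>
    simp only [add_smul, decompose_add, DirectSum.add_apply, AddSubgroup.coe_add, hr, hs]

theorem Submodule.IsHomogeneous.smul [GradedSMul 𝒜 ℰ] (hI : I.IsHomogeneous 𝒜)
    {N : Submodule B E} (hN : N.IsHomogeneous ℰ) : (I • N).IsHomogeneous ℰ := by
  classical
  intro n x hx
  refine Submodule.smul_induction_on hx (fun a ha y hy => ?_) fun x y hx hy => ?_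
  · rw [← sum_support_decompose ℰ y, Finset.smul_sum, decompose_sum, DFinsupp.finsetSum_apply,
      AddSubmonoidClass.coe_finsetSum]
    refine Submodule.sum_mem _ fun m _ => ?_
    rw [coe_decompose_smul_of_right_mem 𝒜 a (decompose ℰ y m).2]
    exact Submodule.smul_mem_smul (hI _ ha) (hN m hy)
  · simp only [decompose_add, DirectSum.add_apply, AddSubgroup.coe_add]
    exact add_mem hx hy

theorem Submodule.IsHomogeneous.le_of_le_sup_smul [GradedSMul 𝒜 ℰ] (hI : I.IsHomogeneous 𝒜)
    (hjac : I.comap ((GradeZero.subring 𝒜).subtype : 𝒜 0 →+* B) ≤ Ideal.jacobson ⊥)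
    {N N' : Submodule B E} (hN : N.IsHomogeneous ℰ) (hN' : N'.IsHomogeneous ℰ) (hfg : N'.FG)
    (hle : N' ≤ N ⊔ I • N') : N' ≤ N := by
  obtain ⟨r, hr, hrN⟩ := exists_sub_one_mem_and_smul_le_of_fg_of_le_sup hfg le_rfl hle
  obtain ⟨c, hc⟩ := (hI.isUnit_decompose_zero hjac hr).exists_left_inv
  intro x hx
  have hr₀x : (decompose 𝒜 r 0 : B) • x ∈ N := by
    refine hN.mem_iff.2 fun n => ?_
    have hcomp : (decompose ℰ ((decompose 𝒜 r 0 : B) • x) n : E) =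
        decompose ℰ (r • (decompose ℰ x n : E)) n := by
      rw [coe_decompose_smul_of_left_mem (decompose 𝒜 r 0).2,
        coe_decompose_smul_of_right_mem 𝒜 r (decompose ℰ x n).2, sub_zero, sub_self]
    rw [hcomp]
    exact hN n (hrN (smul_mem_pointwise_smul _ r N' (hN' n hx)))
  simpa [smul_smul, hc] using N.smul_mem c hr₀x

theorem LinearMap.surjective_of_graded_of_le_sup_smul [GradedSMul 𝒜 ℱ] [Module.Finite B F]
    (hI : I.IsHomogeneous 𝒜)
    (hjac : I.comap ((GradeZero.subring 𝒜).subtype : 𝒜 0 →+* B) ≤ Ideal.jacobson ⊥)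
    {u : E →ₗ[B] F} (hu : ∀ m, ∀ x ∈ ℰ m, u x ∈ ℱ m) (h : ⊤ ≤ range u ⊔ I • ⊤) :
    Function.Surjective u :=
  range_eq_top.1 <| top_le_iff.1 <| hI.le_of_le_sup_smul hjac (range_isHomogeneous_of_graded hu)
    (fun _ _ _ => Submodule.mem_top) Module.Finite.fg_top h

theorem LinearMap.injective_of_graded_of_ker_le_smul [GradedSMul 𝒜 ℰ] [Module.Finite B E]
    [Module.Projective B F] (hI : I.IsHomogeneous 𝒜)
    (hjac : I.comap ((GradeZero.subring 𝒜).subtype : 𝒜 0 →+* B) ≤ Ideal.jacobson ⊥)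
    {u : E →ₗ[B] F} (hu : ∀ m, ∀ x ∈ ℰ m, u x ∈ ℱ m) (hsurj : Function.Surjective u)
    (hker : ker u ≤ I • ⊤) : Function.Injective u := by
  obtain ⟨s, hs⟩ := Module.projective_lifting_property u LinearMap.id hsurj
  have hfg : (ker u).FG := by
    rw [← range_id_sub_comp_eq_ker hs, range_eq_map]
    exact Module.Finite.fg_top.map _
  have hbot : (⊥ : Submodule B E).IsHomogeneous ℰ := fun n x hx => by
    rw [(Submodule.mem_bot B).1 hx, decompose_zero, DirectSum.zero_apply, ZeroMemClass.coe_zero]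
    exact zero_mem _
  refine ker_eq_bot.1 <| le_bot_iff.1 <| hI.le_of_le_sup_smul hjac hbot
    (ker_isHomogeneous_of_graded hu) hfg ?_
  rw [bot_sup_eq]
  exact (le_inf le_rfl hker).trans (ker_inf_smul_top_le_smul_ker hs I)

variable [GradedSMul 𝒜 ℰ] [GradedSMul 𝒜 ℱ]

variable (𝒜 ℰ ℱ) in
def LinearMap.gradedPart (u : E →ₗ[B] F) : E →ₗ[B] F where
  __ := u.toAddMonoidHom.gradedPart ℰ ℱ
  map_smul' b x := by
    induction b using Decomposition.inductionOn 𝒜 with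
    | zero => simp
    | @homogeneous k b =>
      induction x using Decomposition.inductionOn ℰ with
      | zero => simp
      | @homogeneous m x =>
        simp only [AddMonoidHom.toFun_eq_coe, RingHom.id_apply,
          AddMonoidHom.gradedPart_apply_of_mem _ x.2,
          AddMonoidHom.gradedPart_apply_of_mem _ (GradedSMul.smul_mem b.2 x.2 : _ ∈ ℰ (k + m)),
          toAddMonoidHom_coe, map_smul, coe_decompose_smul_of_left_mem b.2, vadd_eq_add]
        rw [add_sub_cancel_left]
      | add x y hx hy => simp_all [smul_add]
    | add b c hb hc => simp_all [add_smul]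

theorem LinearMap.gradedPart_apply_of_mem (u : E →ₗ[B] F) {m : ι} {x : E} (hx : x ∈ ℰ m) :
    u.gradedPart 𝒜 ℰ ℱ x = decompose ℱ (u x) m :=
  u.toAddMonoidHom.gradedPart_apply_of_mem hx

theorem LinearMap.gradedPart_mem (u : E →ₗ[B] F) {m : ι} {x : E} (hx : x ∈ ℰ m) :
    u.gradedPart 𝒜 ℰ ℱ x ∈ ℱ m := by
  rw [u.gradedPart_apply_of_mem hx]
  exact (decompose ℱ (u x) m).2

theorem LinearMap.gradedPart_sub_mem {u : E →ₗ[B] F} {N : Submodule B F}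
    (hN : N.IsHomogeneous ℱ) (hu : ∀ m, ∀ x ∈ ℰ m, ∃ y ∈ ℱ m, u x - y ∈ N) (x : E) :
    u.gradedPart 𝒜 ℰ ℱ x - u x ∈ N := by
  induction x using Decomposition.inductionOn ℰ with
  | zero => simp
  | @homogeneous m x =>
    obtain ⟨y, hy, hxy⟩ := hu m x x.2
    have : u.gradedPart 𝒜 ℰ ℱ x - u x = decompose ℱ (u x - y) m - (u x - y) := by
      rw [u.gradedPart_apply_of_mem x.2, decompose_sub, DirectSum.sub_apply, AddSubgroup.coe_sub,
        decompose_of_mem_same ℱ hy]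
      abel
    rw [this]
    exact sub_mem (hN m hxy) hxy
  | add x y hx hy =>
    rw [map_add, map_add, add_sub_add_comm]
    exact add_mem hx hy

end GradedModule

theorem graded_henselian_isomorphism_lifting_general
    {M : Type*} [AddCommGroup M] [DecidableEq M]
    {B : Type*} [CommRing B] (𝒜 : M → AddSubgroup B) [GradedRing 𝒜]
    (I : Ideal B) (hI : Ideal.IsHomogeneous 𝒜 I)
    (hHens : HenselianRing (𝒜 0)
      (Ideal.comap ((SetLike.GradeZero.subring 𝒜).subtype : (𝒜 0) →+* B) I))
    {E : Type*} [AddCommGroup E] [Module B E]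
    (ℰ : M → AddSubgroup E) [SetLike.GradedSMul 𝒜 ℰ] [DirectSum.Decomposition ℰ]
    [Module.Finite B E] [Module.Projective B E]
    {F : Type*} [AddCommGroup F] [Module B F]
    (ℱ : M → AddSubgroup F) [SetLike.GradedSMul 𝒜 ℱ] [DirectSum.Decomposition ℱ]
    [Module.Finite B F] [Module.Projective B F]
    (hiso : ∃ w : (E ⧸ (I • (⊤ : Submodule B E))) →ₗ[B] (F ⧸ (I • (⊤ : Submodule B F))),
      Function.Bijective w ∧
        ∀ m : M, w '' (Submodule.Quotient.mk '' (ℰ m : Set E)) =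
          Submodule.Quotient.mk '' (ℱ m : Set F)) :
    ∃ u : E →ₗ[B] F, (∀ m : M, ∀ x ∈ ℰ m, u x ∈ ℱ m) ∧ Function.Bijective u := by
  obtain ⟨w, hw, hw_deg⟩ := hiso
  obtain ⟨u₀, hu₀⟩ := Module.projective_lifting_property (I • ⊤ : Submodule B F).mkQ
    (w ∘ₗ (I • ⊤ : Submodule B E).mkQ) (Submodule.mkQ_surjective _)
  have hu₀_deg : ∀ m, ∀ x ∈ ℰ m, ∃ y ∈ ℱ m, u₀ x - y ∈ (I • ⊤ : Submodule B F) := by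
    intro m x hx
    obtain ⟨y, hy, hyx⟩ : w (Submodule.Quotient.mk x) ∈ Submodule.Quotient.mk '' (ℱ m : Set F) :=
      hw_deg m ▸ Set.mem_image_of_mem w (Set.mem_image_of_mem _ hx)
    refine ⟨y, hy, (Submodule.Quotient.eq _).1 ?_⟩
    rw [hyx, ← Submodule.mkQ_apply, ← LinearMap.comp_apply, hu₀, LinearMap.comp_apply,
      Submodule.mkQ_apply]
  let u := u₀.gradedPart 𝒜 ℰ ℱ
  have hu : ∀ m, ∀ x ∈ ℰ m, u x ∈ ℱ m := fun _ _ => u₀.gradedPart_mem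
  have hu_lift : (I • ⊤ : Submodule B F).mkQ ∘ₗ u = w ∘ₗ (I • ⊤ : Submodule B E).mkQ := by
    rw [← hu₀]
    ext x
    exact (Submodule.Quotient.eq _).2
      (u₀.gradedPart_sub_mem (hI.smul fun _ _ _ => Submodule.mem_top) hu₀_deg x)
  have hsurj := u.surjective_of_graded_of_le_sup_smul hI hHens.jac hu
    (u.top_le_range_sup_of_mkQ_comp_eq hu_lift hw.2)
  exact ⟨u, hu, u.injective_of_graded_of_ker_le_smul hI hHens.jac hu hsurj
    (u.ker_le_of_mkQ_comp_eq hu_lift hw.1), hsurj⟩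

/-- Graded projective modules over a graded ring with `(B₀, I₀)` henselian and
`I_m = B_m` for `m ≠ 0`: if the reductions modulo `I` of two finitely generated
graded projective `B`-modules `E` and `F` are isomorphic compatibly with the
gradings (a `B`-linear bijection `E/IE → F/IF` mapping the image of `E_m` onto the
image of `F_m` for every `m`), then there is a graded `B`-linear bijection `E → F`. -/
theorem graded_henselian_isomorphism_lifting
    {M : Type*} [AddCommGroup M] [DecidableEq M]
    {B : Type*} [CommRing B] (𝒜 : M → AddSubgroup B) [GradedRing 𝒜]
    (I : Ideal B) (hI : Ideal.IsHomogeneous 𝒜 I)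
    (hIm : ∀ m : M, m ≠ 0 → ∀ x : B, x ∈ 𝒜 m → x ∈ I)
    (hHens : HenselianRing (𝒜 0)
      (Ideal.comap ((SetLike.GradeZero.subring 𝒜).subtype : (𝒜 0) →+* B) I))
    {E : Type*} [AddCommGroup E] [Module B E]
    (ℰ : M → AddSubgroup E) [SetLike.GradedSMul 𝒜 ℰ] [DirectSum.Decomposition ℰ]
    [Module.Finite B E] [Module.Projective B E]
    {F : Type*} [AddCommGroup F] [Module B F]
    (ℱ : M → AddSubgroup F) [SetLike.GradedSMul 𝒜 ℱ] [DirectSum.Decomposition ℱ]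
    [Module.Finite B F] [Module.Projective B F]
    (hiso : ∃ w : (E ⧸ (I • (⊤ : Submodule B E))) →ₗ[B] (F ⧸ (I • (⊤ : Submodule B F))),
      Function.Bijective w ∧
        ∀ m : M, w '' (Submodule.Quotient.mk '' (ℰ m : Set E)) =
          Submodule.Quotient.mk '' (ℱ m : Set F)) :
    ∃ u : E →ₗ[B] F, (∀ m : M, ∀ x ∈ ℰ m, u x ∈ ℱ m) ∧ Function.Bijective u :=
  graded_henselian_isomorphism_lifting_general 𝒜 I hI hHens ℰ ℱ hiso
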